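/- arXiv:1108.4171 — 2 statements merged into one kernel-verified Lean document; each statement's English description precedes it below -/
import Mathlib

section
/- Let g be a finite-dimensional semisimple Lie algebra over an algebraically closed field of characteristic 0, and let (e,h,f) be an sl_2-triple in g. Then g = [e,g] ⊕ z_g(f), i.e., the Slodowy slice e + z_g(f) is transverse to the adjoint orbit of e at the point e. -/
/-!
Work in any finite-dimensional representation `M` of the triple and let
`C = h² + 2h + 4fe` be the Casimir operator, which commutes with `h`, `e` and `f`.
Suppose a nonzero `w` with `⁅e, w⁆ = 0` and `⁅h, w⁆ = n • w` (so `n ∈ ℕ`) were `⁅f, v⁆`.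
Projecting to generalized `h`-eigenspaces we may take `v` of generalized weight `n + 2`.
Then `C v - (n² + 2n) • v` is killed by `f`, and a nonzero vector killed by `f` has a
nonpositive weight, so `C v = (n² + 2n) • v`. Yet the `e`-string through an `h`-eigenvector
of weight `n + 2` in this `C`-eigenspace ends at a primitive vector of weight `n + 2 + 2j`,
on which `C` acts by a larger scalar. Since `range f ⊓ ker e` is `h`-stable, it is therefore
zero; by symmetry so is `range e ⊓ ker f`, and counting dimensions gives the decomposition.
-/

open LieAlgebra LieModule Module.End Set

namespace Module.End

variable {R V : Type*} [CommRing R] [AddCommGroup V] [Module R V]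

lemma mapsTo_maxGenEigenspace_of_lie_eq_smul {H T : Module.End R V} {a : R}
    (hT : ⁅H, T⁆ = a • T) (μ : R) :
    MapsTo T (H.maxGenEigenspace μ) (H.maxGenEigenspace (μ + a)) := by
  have hTH : T * H = H * T - a • T := by rw [← hT, Ring.lie_def]; abel
  have hsemi : SemiconjBy T (H - μ • 1) (H - (μ + a) • 1) := by
    simp only [SemiconjBy, mul_sub, sub_mul, add_smul, add_mul, smul_mul_assoc, mul_smul_comm,
      mul_one, one_mul, hTH]
    abel
  intro x hx
  obtain ⟨k, hk⟩ := (mem_maxGenEigenspace _ _ _).mp hx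
  refine (mem_maxGenEigenspace _ _ _).mpr ⟨k, ?_⟩
  rw [← mul_apply, ← (hsemi.pow_right k).eq, mul_apply, hk, map_zero]

lemma exists_mem_ne_zero_apply_eq_smul_of_mem_maxGenEigenspace {T : Module.End R V}
    {p : Submodule R V} (hp : MapsTo T p p) {μ : R} {x : V} (hx : x ∈ T.maxGenEigenspace μ)
    (hxp : x ∈ p) (hx0 : x ≠ 0) : ∃ u ∈ p, u ≠ 0 ∧ T u = μ • u := by
  obtain ⟨k, hk⟩ := (mem_maxGenEigenspace _ _ _).mp hx
  obtain ⟨j, hj0, hj⟩ := Nat.exists_not_and_succ_of_not_zero_of_exists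
    (p := fun j ↦ ((T - μ • 1) ^ j) x = 0) (by simpa using hx0) ⟨k, hk⟩
  have hp' : MapsTo ⇑(T - μ • 1 : Module.End R V) p p := fun y hy ↦ by
    simpa using p.sub_mem (hp hy) (p.smul_mem μ hy)
  refine ⟨_, (coe_pow (T - μ • 1) j ▸ hp'.iterate j) hxp, hj0, ?_⟩
  rwa [pow_succ', mul_apply, LinearMap.sub_apply, LinearMap.smul_apply, one_apply,
    sub_eq_zero] at hj

end Module.End

namespace Module.End

variable {K V : Type*} [Field K] [AddCommGroup V] [Module K V]

lemma exists_mem_maxGenEigenspace_apply_eq [IsAlgClosed K] [FiniteDimensional K V]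
    {H T : Module.End K V} {a : K}
    (hT : ∀ ν, MapsTo T (H.maxGenEigenspace ν) (H.maxGenEigenspace (ν + a))) {μ : K} {w : V}
    (hw : w ∈ H.maxGenEigenspace (μ + a)) (hwT : w ∈ LinearMap.range T) :
    ∃ v ∈ H.maxGenEigenspace μ, T v = w := by
  obtain ⟨v, rfl⟩ := hwT
  have hv : v ∈ H.maxGenEigenspace μ ⊔ ⨆ (ν) (_ : ν ≠ μ), H.maxGenEigenspace ν := by
    rw [← iSup_split_single, iSup_maxGenEigenspace_eq_top]; trivial
  obtain ⟨v₁, hv₁, v₂, hv₂, rfl⟩ := Submodule.mem_sup.mp hv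
  have hmap : (⨆ (ν) (_ : ν ≠ μ), H.maxGenEigenspace ν).map T ≤
      ⨆ (ν) (_ : ν ≠ μ + a), H.maxGenEigenspace ν := by
    simp only [Submodule.map_iSup, iSup_le_iff]
    exact fun ν hν ↦ (Submodule.map_le_iff_le_comap.mpr fun x hx ↦
      Submodule.mem_comap.mpr (hT ν hx)).trans (le_iSup₂_of_le (ν + a) (by simpa using hν) le_rfl)
  have hTv₂ : T v₂ = 0 := by
    refine (H.independent_maxGenEigenspace (μ + a)).le_bot
      ⟨?_, hmap (Submodule.mem_map_of_mem hv₂)⟩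
    simpa using sub_mem hw (hT μ hv₁)
  exact ⟨v₁, hv₁, by rw [map_add, hTv₂, add_zero]⟩

end Module.End

namespace LinearMap

variable {K V W : Type*} [Field K] [AddCommGroup V] [Module K V] [AddCommGroup W] [Module K W]

lemma isCompl_range_ker_of_disjoint [FiniteDimensional K V] [FiniteDimensional K W]
    {A : V →ₗ[K] W} {B : W →ₗ[K] V} (hAB : Disjoint (range A) (ker B))
    (hBA : Disjoint (range B) (ker A)) : IsCompl (range A) (ker B) := by
  refine (Submodule.isCompl_iff_disjoint _ _ ?_).mpr hAB
  have := Submodule.finrank_add_finrank_le_of_disjoint hBA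
  have := A.finrank_range_add_finrank_ker
  have := B.finrank_range_add_finrank_ker
  omega

end LinearMap

namespace IsSl2Triple

variable {K L M : Type*} [Field K] [LieRing L] [LieAlgebra K L]
  [AddCommGroup M] [Module K M] [LieRingModule L M] [LieModule K L M] {h e f : L}

variable (K M) in
def casimir (h e f : L) : Module.End K M :=
  toEnd K L M h * toEnd K L M h + 2 • toEnd K L M h + 4 • (toEnd K L M f * toEnd K L M e)

lemma casimir_apply (m : M) :
    casimir K M h e f m = ⁅h, ⁅h, m⁆⁆ + 2 • ⁅h, m⁆ + 4 • ⁅f, ⁅e, m⁆⁆ := rfl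

lemma HasPrimitiveVectorWith.casimir_apply {t : IsSl2Triple h e f} {m : M} {μ : K}
    (P : t.HasPrimitiveVectorWith m μ) : casimir K M h e f m = (μ ^ 2 + 2 * μ) • m := by
  rw [IsSl2Triple.casimir_apply, P.lie_e, P.lie_h, lie_smul, P.lie_h, lie_zero, smul_zero,
    add_zero]
  module

variable (t : IsSl2Triple h e f)
include t

lemma lie_e_lie_h (m : M) : ⁅e, ⁅h, m⁆⁆ = ⁅h, ⁅e, m⁆⁆ - 2 • ⁅e, m⁆ := by
  rw [leibniz_lie, ← lie_skew, t.lie_h_e_nsmul, neg_lie, nsmul_lie]; abel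

lemma lie_f_lie_h (m : M) : ⁅f, ⁅h, m⁆⁆ = ⁅h, ⁅f, m⁆⁆ + 2 • ⁅f, m⁆ := by
  rw [leibniz_lie, ← lie_skew, t.lie_h_f_nsmul, neg_lie, neg_lie, nsmul_lie, neg_neg]; abel

lemma lie_e_lie_f (m : M) : ⁅e, ⁅f, m⁆⁆ = ⁅f, ⁅e, m⁆⁆ + ⁅h, m⁆ := by
  rw [leibniz_lie, t.lie_e_f, add_comm]

lemma commute_casimir_toEnd_h : Commute (casimir K M h e f) (toEnd K L M h) := by
  ext m
  simp only [mul_apply, toEnd_apply_apply, casimir_apply, lie_add, lie_nsmul, t.lie_e_lie_h,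
    t.lie_f_lie_h, lie_sub]
  abel

lemma commute_casimir_toEnd_e : Commute (casimir K M h e f) (toEnd K L M e) := by
  ext m
  simp only [mul_apply, toEnd_apply_apply, casimir_apply, lie_add, lie_nsmul, t.lie_e_lie_h,
    t.lie_e_lie_f, lie_sub]
  abel

lemma commute_casimir_toEnd_f : Commute (casimir K M h e f) (toEnd K L M f) := by
  ext m
  simp only [mul_apply, toEnd_apply_apply, casimir_apply, lie_add, lie_nsmul, t.lie_f_lie_h,
    t.lie_e_lie_f]
  abel

lemma lie_toEnd_h_f : ⁅toEnd K L M h, toEnd K L M f⁆ = (-2 : K) • toEnd K L M f := by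
  ext m
  rw [Ring.lie_def, LinearMap.sub_apply, mul_apply, mul_apply, LinearMap.smul_apply]
  simp only [toEnd_apply_apply, t.lie_f_lie_h]
  module

lemma mapsTo_ker_toEnd_f : MapsTo (toEnd K L M h) (LinearMap.ker (toEnd K L M f))
    (LinearMap.ker (toEnd K L M f)) := by
  intro m hm
  simp_all only [SetLike.mem_coe, LinearMap.mem_ker, toEnd_apply_apply, t.lie_f_lie_h, lie_zero,
    smul_zero, add_zero]

lemma mapsTo_ker_toEnd_e : MapsTo (toEnd K L M h) (LinearMap.ker (toEnd K L M e))
    (LinearMap.ker (toEnd K L M e)) := by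
  intro m hm
  simp_all only [SetLike.mem_coe, LinearMap.mem_ker, toEnd_apply_apply, t.lie_e_lie_h, lie_zero,
    smul_zero, sub_zero]

lemma mapsTo_range_toEnd_f : MapsTo (toEnd K L M h) (LinearMap.range (toEnd K L M f))
    (LinearMap.range (toEnd K L M f)) := by
  rintro _ ⟨m, rfl⟩
  refine ⟨⁅h, m⁆ - 2 • m, ?_⟩
  simp only [toEnd_apply_apply, lie_sub, lie_nsmul, t.lie_f_lie_h]
  abel

variable [CharZero K] [FiniteDimensional K M]

lemma exists_eq_neg_natCast_of_lie_f_eq_zero {μ : K} {m : M}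
    (hm : m ∈ (toEnd K L M h).maxGenEigenspace μ) (hf : ⁅f, m⁆ = 0) (hm0 : m ≠ 0) :
    ∃ n : ℕ, μ = -n := by
  obtain ⟨u, hu, hu0, hhu⟩ :=
    exists_mem_ne_zero_apply_eq_smul_of_mem_maxGenEigenspace t.mapsTo_ker_toEnd_f hm hf hm0
  have P : t.symm.HasPrimitiveVectorWith u (-μ) :=
    ⟨hu0, by rw [neg_lie, ← toEnd_apply_apply (R := K), hhu, neg_smul], hu⟩
  obtain ⟨n, hn⟩ := P.exists_nat
  exact ⟨n, by rw [← hn, neg_neg]⟩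

lemma exists_hasPrimitiveVectorWith_pow_toEnd_e_apply {μ : K} {m : M} (hm : ⁅h, m⁆ = μ • m)
    (hm0 : m ≠ 0) : ∃ n : ℕ, t.HasPrimitiveVectorWith ((toEnd K L M e ^ n) m) (μ + 2 * n) := by
  have hstring : ∃ k, (toEnd K L M e ^ k) m = 0 := by
    by_contra! hne
    refine Module.Finite.not_linearIndependent_of_infinite (R := K) _
      ((toEnd K L M h).eigenvectors_linearIndependent' (fun k : ℕ ↦ μ + 2 * k) ?_ _
        fun k ↦ ⟨mem_eigenspace_iff.mpr (t.lie_h_pow_toEnd_e hm k), hne k⟩)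
    intro a b hab
    simpa using hab
  obtain ⟨n, hn0, hn⟩ := Nat.exists_not_and_succ_of_not_zero_of_exists (by simpa) hstring
  exact ⟨n, hn0, t.lie_h_pow_toEnd_e hm n, by rwa [lie_e_pow_toEnd_e]⟩

lemma exists_casimir_eq_of_lie_h_eq_smul {μ c : K} {m : M} (hm : ⁅h, m⁆ = μ • m) (hm0 : m ≠ 0)
    (hc : casimir K M h e f m = c • m) : ∃ j : ℕ, c = (μ + 2 * j) ^ 2 + 2 * (μ + 2 * j) := by
  obtain ⟨j, P⟩ := t.exists_hasPrimitiveVectorWith_pow_toEnd_e_apply hm hm0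
  have hCj : casimir K M h e f ((toEnd K L M e ^ j) m) = c • (toEnd K L M e ^ j) m := by
    rw [← mul_apply, (t.commute_casimir_toEnd_e.pow_right j).eq, mul_apply, hc, map_smul]
  exact ⟨j, smul_left_injective K P.ne_zero (hCj.symm.trans P.casimir_apply)⟩

variable [IsAlgClosed K]

omit t in
lemma HasPrimitiveVectorWith.notMem_range_toEnd_f {t : IsSl2Triple h e f} {w : M} {μ : K}
    (P : t.HasPrimitiveVectorWith w μ) : w ∉ LinearMap.range (toEnd K L M f) := by
  intro hw
  obtain ⟨n, rfl⟩ := P.exists_nat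
  set C := casimir K M h e f
  have hw' : w ∈ (toEnd K L M h).maxGenEigenspace ((n + 2 : K) + -2) := by
    rw [add_neg_cancel_right]
    exact (mem_maxGenEigenspace _ _ _).mpr ⟨1, by simp [P.lie_h]⟩
  obtain ⟨v, hv, rfl⟩ := exists_mem_maxGenEigenspace_apply_eq
    (mapsTo_maxGenEigenspace_of_lie_eq_smul t.lie_toEnd_h_f) hw' hw
  have hCv : C v = ((n : K) ^ 2 + 2 * n) • v := by
    by_contra hne
    have hx : C v - ((n : K) ^ 2 + 2 * n) • v ∈ (toEnd K L M h).maxGenEigenspace (n + 2) :=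
      sub_mem (mapsTo_maxGenEigenspace_of_comm t.commute_casimir_toEnd_h.symm _ hv)
        (Submodule.smul_mem _ _ hv)
    have hfx : ⁅f, C v - ((n : K) ^ 2 + 2 * n) • v⁆ = 0 := by
      rw [lie_sub, lie_smul, ← toEnd_apply_apply (R := K), ← mul_apply,
        ← t.commute_casimir_toEnd_f.eq, mul_apply, P.casimir_apply, toEnd_apply_apply, sub_self]
    obtain ⟨m, hm⟩ := t.exists_eq_neg_natCast_of_lie_f_eq_zero hx hfx (sub_ne_zero.mpr hne)
    have hcast : ((n + 2 + m : ℕ) : K) = 0 := by push_cast; linear_combination hm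
    exact absurd (Nat.cast_eq_zero.mp hcast) (by omega)
  have hv0 : v ≠ 0 := by rintro rfl; exact P.ne_zero (map_zero _)
  obtain ⟨u, hu, hu0, hhu⟩ := exists_mem_ne_zero_apply_eq_smul_of_mem_maxGenEigenspace
    (p := C.eigenspace ((n : K) ^ 2 + 2 * n))
    (mapsTo_genEigenspace_of_comm t.commute_casimir_toEnd_h _ 1) hv
    (mem_eigenspace_iff.mpr hCv) hv0
  obtain ⟨j, hj⟩ := t.exists_casimir_eq_of_lie_h_eq_smul hhu hu0 (mem_eigenspace_iff.mp hu)
  have : ((n ^ 2 + 2 * n : ℕ) : K) = ((n + 2 + 2 * j) ^ 2 + 2 * (n + 2 + 2 * j) : ℕ) := by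
    push_cast; linear_combination hj
  have := Nat.cast_injective this
  nlinarith

lemma disjoint_range_toEnd_f_ker_toEnd_e :
    Disjoint (LinearMap.range (toEnd K L M f)) (LinearMap.ker (toEnd K L M e)) := by
  set W := LinearMap.range (toEnd K L M f) ⊓ LinearMap.ker (toEnd K L M e)
  rw [disjoint_iff]
  by_contra hW
  have hHW : MapsTo (toEnd K L M h) W W := fun _ hx ↦
    ⟨t.mapsTo_range_toEnd_f hx.1, t.mapsTo_ker_toEnd_e hx.2⟩
  have : Nontrivial W := Submodule.nontrivial_iff_ne_bot.mpr hW
  obtain ⟨μ, hμ⟩ := Module.End.exists_eigenvalue ((toEnd K L M h).restrict hHW)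
  obtain ⟨⟨w, hwW⟩, hw⟩ := hμ.exists_hasEigenvector
  obtain ⟨hwf, hwe⟩ := Submodule.mem_inf.mp hwW
  have P : t.HasPrimitiveVectorWith w μ :=
    ⟨fun h0 ↦ hw.2 (by simp [h0]), congrArg Subtype.val hw.apply_eq_smul, hwe⟩
  exact P.notMem_range_toEnd_f hwf

theorem isCompl_range_toEnd_e_ker_toEnd_f :
    IsCompl (LinearMap.range (toEnd K L M e)) (LinearMap.ker (toEnd K L M f)) :=
  LinearMap.isCompl_range_ker_of_disjoint t.symm.disjoint_range_toEnd_f_ker_toEnd_e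
    t.disjoint_range_toEnd_f_ker_toEnd_e

end IsSl2Triple

theorem slodowy_slice_transverse_general
    {K L : Type*} [Field K] [IsAlgClosed K] [CharZero K]
    [LieRing L] [LieAlgebra K L] [FiniteDimensional K L]
    {h e f : L} (ht : IsSl2Triple h e f) :
    IsCompl (LinearMap.range ((ad K L e) : L →ₗ[K] L))
      (LinearMap.ker ((ad K L f) : L →ₗ[K] L)) :=
  ht.isCompl_range_toEnd_e_ker_toEnd_f

/-- For an `sl₂`-triple `(e,h,f)` in a semisimple Lie algebra over an algebraically closed
field of characteristic zero, `g = [e,g] ⊕ z_g(f)`: the Slodowy slice `e + z_g(f)` is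
transverse to the adjoint orbit of `e` at `e`. -/
theorem slodowy_slice_transverse
    {K L : Type*} [Field K] [IsAlgClosed K] [CharZero K]
    [LieRing L] [LieAlgebra K L] [FiniteDimensional K L] [LieAlgebra.IsSemisimple K L]
    {h e f : L} (ht : IsSl2Triple h e f) :
    IsCompl (LinearMap.range ((ad K L e) : L →ₗ[K] L))
      (LinearMap.ker ((ad K L f) : L →ₗ[K] L)) :=
  slodowy_slice_transverse_general ht
end

section
/- Let B be a commutative Noetherian ring. Then B is a normal domain if and only if the formal power series ring B[[x]] is a normal domain. -/
/-!
Let `K` be the fraction field of `B`. The ring `K⟦X⟧` is a discrete valuation ring, hence normal,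
so an element of `Frac B⟦X⟧` integral over `B⟦X⟧` already lies in `K⟦X⟧`; being a fraction, it is
moreover almost integral over `B⟦X⟧`: `d • f ^ n ∈ B⟦X⟧` for a fixed `d ≠ 0`. Reading off the
lowest nonzero coefficient of `d`, and peeling off one coefficient of `f` at a time, each
coefficient of `f` is almost integral over `B`, hence integral (`B` is Noetherian), hence in `B`.
Conversely, `B` is a retract of `B⟦X⟧` via the constant coefficient, and a retract of a normal
domain is normal.
-/

open PowerSeries
open scoped nonZeroDivisors

attribute [local instance] FractionRing.liftAlgebra in
theorem IsIntegrallyClosed.of_isIntegrallyClosed_of_smul_mem_range {R S : Type*}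
    [CommRing R] [CommRing S] [Algebra R S] [IsDomain S] [FaithfulSMul R S] [IsIntegrallyClosed S]
    (h : ∀ s : S, IsIntegral R s → ∀ c ∈ R⁰, c • s ∈ (algebraMap R S).range →
      s ∈ (algebraMap R S).range) :
    IsIntegrallyClosed R := by
  have := IsDomain.of_faithfulSMul R S
  let K := FractionRing R
  let L := FractionRing S
  rw [isIntegrallyClosed_iff K]
  intro x hx
  obtain ⟨⟨b, c⟩, hbc⟩ := IsLocalization.surj R⁰ x
  obtain ⟨s, hs⟩ := IsIntegrallyClosed.isIntegral_iff.mp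
    ((hx.map (IsScalarTower.toAlgHom R K L)).tower_top (A := S))
  rw [IsScalarTower.coe_toAlgHom'] at hs
  have hsR : IsIntegral R s := by
    rw [← isIntegral_algHom_iff (IsScalarTower.toAlgHom R S L)
      (FaithfulSMul.algebraMap_injective S L)]
    simpa [hs] using hx.map (IsScalarTower.toAlgHom R K L)
  have hcs : c.1 • s ∈ (algebraMap R S).range := by
    refine ⟨b, FaithfulSMul.algebraMap_injective S L ?_⟩
    simp only [Algebra.smul_def, map_mul, hs, ← IsScalarTower.algebraMap_apply R S L]
    rw [IsScalarTower.algebraMap_apply R K L, IsScalarTower.algebraMap_apply R K L c, ← map_mul,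
      ← hbc, mul_comm]
  obtain ⟨r, rfl⟩ := h s hsR c.1 c.2 hcs
  refine ⟨r, (algebraMap K L).injective ?_⟩
  rw [← hs, ← IsScalarTower.algebraMap_apply, ← IsScalarTower.algebraMap_apply]

theorem IsIntegrallyClosed.of_leftInverse {R S : Type*} [CommRing R] [CommRing S] [Algebra R S]
    [IsDomain S] [IsIntegrallyClosed S] {ρ : S →+* R}
    (hρ : Function.LeftInverse ρ (algebraMap R S)) :
    IsIntegrallyClosed R := by
  have := (faithfulSMul_iff_algebraMap_injective R S).mpr hρ.injective
  have := IsDomain.of_faithfulSMul R S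
  refine .of_isIntegrallyClosed_of_smul_mem_range fun s _ c hc hcs ↦ ⟨ρ s, ?_⟩
  obtain ⟨r, hr⟩ := hcs
  have hr' : r = c * ρ s := by rw [← hρ r, hr, Algebra.smul_def, map_mul, hρ]
  have hc_mul : algebraMap R S c * (algebraMap R S (ρ s) - s) = 0 := by
    rw [mul_sub, ← map_mul, ← hr', hr, Algebra.smul_def, sub_self]
  exact sub_eq_zero.mp ((mul_eq_zero.mp hc_mul).resolve_left
    ((map_ne_zero_iff _ hρ.injective).mpr (nonZeroDivisors.ne_zero hc)))

section AlmostIntegral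

variable {R S : Type*} [CommRing R] [CommRing S] [Algebra R S]

theorem IsAlmostIntegral.powerSeries_C [IsDomain R] {s : S} (hs : IsAlmostIntegral R s) :
    IsAlmostIntegral R⟦X⟧ (C s) := by
  obtain ⟨r, hr, hr'⟩ := hs
  refine ⟨C r, mem_nonZeroDivisors_of_ne_zero
    ((map_ne_zero_iff _ C_injective).mpr (nonZeroDivisors.ne_zero hr)), fun n ↦ ?_⟩
  obtain ⟨t, ht⟩ := hr' n
  exact ⟨C t, by simp [ht, Algebra.smul_def, algebraMap_apply'']⟩

theorem IsAlmostIntegral.powerSeries_constantCoeff [IsDomain R] {p : S⟦X⟧}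
    (hp : IsAlmostIntegral R⟦X⟧ p) : IsAlmostIntegral R (constantCoeff p) := by
  obtain ⟨d, hd, hd'⟩ := hp
  refine ⟨constantCoeff (divXPowOrder d), mem_nonZeroDivisors_of_ne_zero
    (constantCoeff_divXPowOrder_eq_zero_iff.not.mpr (nonZeroDivisors.ne_zero hd)), fun n ↦ ?_⟩
  obtain ⟨c, hc⟩ := hd' n
  refine ⟨PowerSeries.coeff d.order.toNat c, ?_⟩
  have coeff_X_pow_mul_self (k : ℕ) (g : S⟦X⟧) :
      PowerSeries.coeff k (X ^ k * g) = constantCoeff g := by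
    simpa using coeff_X_pow_mul g k 0
  rw [Algebra.smul_def, ← X_pow_order_mul_divXPowOrder (f := d), algebraMap_apply'',
    algebraMap_apply'', map_mul, map_pow, map_X, mul_assoc] at hc
  have hcoeff := congrArg (PowerSeries.coeff d.order.toNat) hc
  rw [coeff_map, coeff_X_pow_mul_self, map_mul, map_pow,
    ← coeff_zero_eq_constantCoeff_apply (map _ _), coeff_map,
    coeff_zero_eq_constantCoeff_apply] at hcoeff
  rw [hcoeff, Algebra.smul_def]

theorem IsAlmostIntegral.of_X_mul {q : S⟦X⟧} (h : IsAlmostIntegral R⟦X⟧ (X * q)) :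
    IsAlmostIntegral R⟦X⟧ q := by
  obtain ⟨d, hd, hd'⟩ := h
  refine ⟨d, hd, fun n ↦ ?_⟩
  obtain ⟨c, hc⟩ := hd' n
  refine ⟨mk fun j ↦ PowerSeries.coeff (j + n) c, ext fun j ↦ ?_⟩
  have hcoeff := congrArg (PowerSeries.coeff (j + n)) hc
  rw [mul_pow, ← mul_smul_comm, coeff_X_pow_mul] at hcoeff
  rw [← hcoeff]
  simp [algebraMap_apply'']

theorem IsAlmostIntegral.powerSeries_coeff [IsDomain R] {p : S⟦X⟧}
    (hp : IsAlmostIntegral R⟦X⟧ p) (n : ℕ) : IsAlmostIntegral R (PowerSeries.coeff n p) := by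
  induction n generalizing p with
  | zero => simpa using hp.powerSeries_constantCoeff
  | succ n ih =>
    have hshift : IsAlmostIntegral R⟦X⟧ (mk fun k ↦ PowerSeries.coeff (k + 1) p) := by
      refine IsAlmostIntegral.of_X_mul ?_
      rw [← sub_const_eq_X_mul_shift]
      exact sub_mem (H := completeIntegralClosure R⟦X⟧ S⟦X⟧) hp
        hp.powerSeries_constantCoeff.powerSeries_C
    simpa using ih hshift

end AlmostIntegral

theorem PowerSeries.isIntegrallyClosed {R : Type*} [CommRing R] [IsDomain R] [IsNoetherianRing R]
    [IsIntegrallyClosed R] : IsIntegrallyClosed R⟦X⟧ := by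
  let K := FractionRing R
  have : FaithfulSMul R⟦X⟧ K⟦X⟧ := (faithfulSMul_iff_algebraMap_injective _ _).mpr
    (map_injective _ (IsFractionRing.injective R K))
  refine .of_isIntegrallyClosed_of_smul_mem_range (S := K⟦X⟧) fun s hs c hc hcs ↦ ?_
  have hcoeff (n : ℕ) : ∃ r : R, algebraMap R K r = coeff n s :=
    IsIntegrallyClosed.isIntegral_iff.mp <| isAlmostIntegral_iff_isIntegral.mp <|
      (hs.isAlmostIntegral_of_exists_smul_mem_range ⟨c, hc, hcs⟩).powerSeries_coeff n
  choose r hr using hcoeff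
  exact ⟨mk r, ext fun n ↦ by simp [algebraMap_apply'', hr]⟩

/-- A commutative Noetherian ring `B` is a normal domain if and only if the formal power
series ring `B[[x]]` is a normal domain. -/
theorem powerSeries_normal_iff
    {B : Type*} [CommRing B] [IsNoetherianRing B] :
    (IsDomain B ∧ IsIntegrallyClosed B) ↔
      (IsDomain (PowerSeries B) ∧ IsIntegrallyClosed (PowerSeries B)) := by
  have hconst : Function.LeftInverse constantCoeff (algebraMap B B⟦X⟧) := fun b ↦ by simp
  constructor
  · rintro ⟨_, _⟩
    exact ⟨inferInstance, PowerSeries.isIntegrallyClosed⟩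
  · rintro ⟨_, _⟩
    exact ⟨hconst.injective.isDomain _, .of_leftInverse hconst⟩
end
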